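/- Assume σ is d-dimensional and there exists ω ∈ σ^∨ ∩ ℤ^d with ⟨ω, v_j⟩ = 1 for all j = 1, …, n (the Gorenstein condition for the toric ring). Let A = {ω}. Then P(A) = ω + σ^∨ ⊆ Q(m), and sup_{u ∈ σ^∨ \ Q(m)} λ_A(u) = sup_{u ∈ σ^∨ \ O} λ_A(u) = 1; consequently the F-pure threshold and the F-threshold with respect to m of the principal monomial ideal (X^ω) coincide and equal 1. -/

import Mathlib

open Finset Filter Pointwise

noncomputable section

namespace Paper

variable {d n : ℕ}

/-- The standard inner product pairing on `ℝ^d`. -/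
def pair (u w : Fin d → ℝ) : ℝ := ∑ i, u i * w i

/-- The coercion `ℤ^d → ℝ^d`. -/
def toR (u : Fin d → ℤ) : Fin d → ℝ := fun i => (u i : ℝ)

/-- The cone generated by the integer vectors `v 1, …, v n`. -/
def cone (v : Fin n → Fin d → ℤ) : Set (Fin d → ℝ) :=
  {x | ∃ c : Fin n → ℝ, (∀ j, 0 ≤ c j) ∧ x = ∑ j, c j • toR (v j)}

/-- The dual cone `σ^∨ = {u | ⟨u, x⟩ ≥ 0 for all x ∈ σ}`. -/
def dualCone (v : Fin n → Fin d → ℤ) : Set (Fin d → ℝ) :=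
  {u | ∀ x ∈ cone v, 0 ≤ pair u x}

/-- Strong convexity of the cone generated by `v`. -/
def StronglyConvex (v : Fin n → Fin d → ℤ) : Prop :=
  ∀ x ∈ cone v, -x ∈ cone v → x = 0

/-- An integer vector is primitive if the gcd of its coordinates is 1. -/
def IsPrimitive (w : Fin d → ℤ) : Prop := Finset.univ.gcd w = 1

/-- The cone generated by `v` is `d`-dimensional. -/
def FullDim (v : Fin n → Fin d → ℤ) : Prop :=
  Submodule.span ℝ (Set.range fun j => toR (v j)) = ⊤

/-- The Newton polyhedron `P(A) = conv(A) + σ^∨`. -/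
def newton (v : Fin n → Fin d → ℤ) (A : Finset (Fin d → ℤ)) : Set (Fin d → ℝ) :=
  convexHull ℝ (toR '' ↑A) + dualCone v

/-- The set `Q(A) = ⋃_{a ∈ A} (a + σ^∨)`. -/
def QSet (v : Fin n → Fin d → ℤ) (A : Finset (Fin d → ℤ)) : Set (Fin d → ℝ) :=
  ⋃ a ∈ A, (toR a +ᵥ dualCone v)

/-- `λ_A(u) = sup {λ > 0 | u ∈ λ·P(A)}` (and `0` if no such `λ` exists;
note `Real.sSup` of the empty set is `0`). -/
def lam (v : Fin n → Fin d → ℤ) (A : Finset (Fin d → ℤ)) (u : Fin d → ℝ) : ℝ :=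
  sSup {l : ℝ | 0 < l ∧ u ∈ l • newton v A}

/-- `Q(m)` for the maximal monomial ideal, whose exponent set is
`(σ^∨ ∩ ℤ^d) \ {0}`. -/
def Qm (v : Fin n → Fin d → ℤ) : Set (Fin d → ℝ) :=
  ⋃ a ∈ {a : Fin d → ℤ | toR a ∈ dualCone v ∧ a ≠ 0}, (toR a +ᵥ dualCone v)

/-- The set `O = {u ∈ σ^∨ | ⟨u, v_j⟩ ≥ 1 for some j}`. -/
def OSet (v : Fin n → Fin d → ℤ) : Set (Fin d → ℝ) :=
  {u ∈ dualCone v | ∃ j, 1 ≤ pair u (toR (v j))}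

/-!
For `A = {ω}` one has `u ∈ λ • P(A)` iff `⟨u, v_j⟩ ≥ λ` for all `j`, because `⟨ω, v_j⟩ = 1`;
so `λ_A(u) = min_j ⟨u, v_j⟩`. Every `u ∈ σ^∨` outside `O`, or outside `Q(m)`, has some
`⟨u, v_j⟩ ≤ 1`: a `u` with all `⟨u, v_j⟩ > 1` lies in `ω + σ^∨ ⊆ Q(m)`. Conversely the
points `t • ω` with `0 < t < 1` lie outside `O ⊇ Q(m)` and have `λ_A(t • ω) = t`, so both
suprema are `1`.
The inclusion `Q(m) ⊆ O` uses that a nonzero lattice point of `σ^∨` has a positive integer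
pairing with some `v_j`, the `v_j` spanning `ℝ^d`.
-/

lemma pair_eq_dotProduct (u w : Fin d → ℝ) : pair u w = u ⬝ᵥ w := rfl

lemma pair_add_left (u w x : Fin d → ℝ) : pair (u + w) x = pair u x + pair w x :=
  add_dotProduct u w x

lemma pair_sub_left (u w x : Fin d → ℝ) : pair (u - w) x = pair u x - pair w x :=
  sub_dotProduct u w x

lemma pair_neg_left (u x : Fin d → ℝ) : pair (-u) x = -pair u x :=
  neg_dotProduct u x

lemma pair_smul_left (c : ℝ) (u x : Fin d → ℝ) : pair (c • u) x = c * pair u x :=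
  smul_dotProduct c u x

lemma pair_toR_toR (a w : Fin d → ℤ) : pair (toR a) (toR w) = ((a ⬝ᵥ w : ℤ) : ℝ) := by
  simp [pair, toR, dotProduct]

@[simp]
lemma toR_zero : toR (0 : Fin d → ℤ) = 0 :=
  funext fun _ => Int.cast_zero

lemma toR_injective : Function.Injective (toR : (Fin d → ℤ) → Fin d → ℝ) :=
  fun _ _ h => funext fun i => Int.cast_injective (congrFun h i)

lemma toR_mem_cone (v : Fin n → Fin d → ℤ) (j : Fin n) : toR (v j) ∈ cone v :=
  ⟨Pi.single j 1, fun k => by by_cases h : k = j <;> simp [h],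
    by simp [Pi.single_apply]⟩

lemma mem_dualCone_iff {v : Fin n → Fin d → ℤ} {u : Fin d → ℝ} :
    u ∈ dualCone v ↔ ∀ j, 0 ≤ pair u (toR (v j)) := by
  refine ⟨fun h j => h _ (toR_mem_cone v j), ?_⟩
  rintro h x ⟨c, hc, rfl⟩
  simp only [pair_eq_dotProduct, dotProduct_sum, dotProduct_smul, smul_eq_mul] at h ⊢
  exact Finset.sum_nonneg fun j _ => mul_nonneg (hc j) (h j)

lemma add_mem_dualCone {v : Fin n → Fin d → ℤ} {u w : Fin d → ℝ}
    (hu : u ∈ dualCone v) (hw : w ∈ dualCone v) : u + w ∈ dualCone v :=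
  fun x hx => by rw [pair_add_left]; exact add_nonneg (hu x hx) (hw x hx)

lemma smul_mem_dualCone {v : Fin n → Fin d → ℤ} {u : Fin d → ℝ} {t : ℝ}
    (hu : u ∈ dualCone v) (ht : 0 ≤ t) : t • u ∈ dualCone v :=
  fun x hx => by rw [pair_smul_left]; exact mul_nonneg ht (hu x hx)

lemma nonempty_of_fullDim {v : Fin n → Fin d → ℤ} (hd : 1 ≤ d) (hdim : FullDim v) :
    Nonempty (Fin n) := by
  have : Nonempty (Fin d) := ⟨⟨0, hd⟩⟩
  by_contra hn
  rw [not_nonempty_iff] at hn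
  rw [FullDim, Set.range_eq_empty, Submodule.span_empty] at hdim
  exact bot_ne_top hdim

lemma eq_zero_of_forall_pair_eq_zero {v : Fin n → Fin d → ℤ} (hdim : FullDim v)
    {u : Fin d → ℝ} (hu : ∀ j, pair u (toR (v j)) = 0) : u = 0 := by
  obtain ⟨c, hc⟩ := (Submodule.mem_span_range_iff_exists_fun ℝ).mp
    (hdim ▸ Submodule.mem_top : u ∈ Submodule.span ℝ (Set.range fun j => toR (v j)))
  refine dotProduct_self_eq_zero.mp ?_
  calc u ⬝ᵥ u = u ⬝ᵥ ∑ j, c j • toR (v j) := by rw [hc]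
    _ = 0 := by simp [dotProduct_sum, dotProduct_smul, ← pair_eq_dotProduct, hu]

lemma exists_one_le_pair_of_ne_zero {v : Fin n → Fin d → ℤ} (hdim : FullDim v)
    {a : Fin d → ℤ} (ha : toR a ∈ dualCone v) (ha0 : a ≠ 0) :
    ∃ j, 1 ≤ pair (toR a) (toR (v j)) := by
  by_contra! hlt
  refine ha0 (toR_injective ?_)
  rw [toR_zero]
  refine eq_zero_of_forall_pair_eq_zero hdim fun j => ?_
  have hnonneg := mem_dualCone_iff.mp ha j
  have hj := hlt j
  rw [pair_toR_toR] at hnonneg hj ⊢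
  norm_cast at hnonneg hj ⊢
  omega

lemma vadd_dualCone_subset_Qm {v : Fin n → Fin d → ℤ} {a : Fin d → ℤ}
    (ha : toR a ∈ dualCone v) (ha0 : a ≠ 0) : toR a +ᵥ dualCone v ⊆ Qm v :=
  Set.subset_biUnion_of_mem (u := fun a => toR a +ᵥ dualCone v) ⟨ha, ha0⟩

lemma Qm_subset_OSet {v : Fin n → Fin d → ℤ} (hdim : FullDim v) : Qm v ⊆ OSet v := by
  simp only [Qm, Set.iUnion_subset_iff]
  rintro a ⟨ha, ha0⟩ _ ⟨w, hw, rfl⟩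
  obtain ⟨j, hj⟩ := exists_one_le_pair_of_ne_zero hdim ha ha0
  refine ⟨add_mem_dualCone ha hw, j, ?_⟩
  change 1 ≤ pair (toR a + w) _
  rw [pair_add_left]
  linarith [mem_dualCone_iff.mp hw j]

lemma newton_singleton (v : Fin n → Fin d → ℤ) (ω : Fin d → ℤ) :
    newton v {ω} = toR ω +ᵥ dualCone v := by
  rw [newton, Finset.coe_singleton, Set.image_singleton, convexHull_singleton,
    Set.singleton_add]
  rfl

section Gorenstein

variable {v : Fin n → Fin d → ℤ} {ω : Fin d → ℤ}

lemma mem_smul_newton_singleton_iff (hω : ∀ j, pair (toR ω) (toR (v j)) = 1)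
    {l : ℝ} (hl : 0 < l) (u : Fin d → ℝ) :
    u ∈ l • newton v {ω} ↔ ∀ j, l ≤ pair u (toR (v j)) := by
  rw [newton_singleton, Set.mem_smul_set_iff_inv_smul_mem₀ hl.ne',
    Set.mem_vadd_set_iff_neg_vadd_mem, vadd_eq_add, mem_dualCone_iff]
  refine forall_congr' fun j => ?_
  rw [pair_add_left, pair_neg_left, pair_smul_left, hω j, le_neg_add_iff_add_le, add_zero,
    le_inv_mul_iff₀ hl, mul_one]

lemma pair_smul_of_pair_eq_one (hω : ∀ j, pair (toR ω) (toR (v j)) = 1) (t : ℝ) (j : Fin n) :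
    pair (t • toR ω) (toR (v j)) = t := by
  rw [pair_smul_left, hω j, mul_one]

lemma mem_Qm_of_one_lt_pair (hω : ∀ j, pair (toR ω) (toR (v j)) = 1)
    (hωl : toR ω ∈ dualCone v) (hω0 : ω ≠ 0) {u : Fin d → ℝ}
    (hu : ∀ j, 1 < pair u (toR (v j))) : u ∈ Qm v := by
  refine vadd_dualCone_subset_Qm hωl hω0 ⟨u - toR ω, mem_dualCone_iff.mpr fun j => ?_, ?_⟩
  · rw [pair_sub_left, hω j]
    linarith [hu j]
  · exact add_sub_cancel (toR ω) u

lemma lam_singleton_eq (hω : ∀ j, pair (toR ω) (toR (v j)) = 1) (u : Fin d → ℝ) :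
    lam v {ω} u = sSup {l : ℝ | 0 < l ∧ ∀ j, l ≤ pair u (toR (v j))} := by
  rw [lam]
  congr 1
  ext l
  exact and_congr_right fun hl => mem_smul_newton_singleton_iff hω hl u

lemma lam_singleton_smul (hω : ∀ j, pair (toR ω) (toR (v j)) = 1) [Nonempty (Fin n)]
    {t : ℝ} (ht : 0 < t) : lam v {ω} (t • toR ω) = t := by
  have hset : {l : ℝ | 0 < l ∧ ∀ j, l ≤ pair (t • toR ω) (toR (v j))} = Set.Ioc 0 t := by
    ext l
    simp [pair_smul_of_pair_eq_one hω]
  rw [lam_singleton_eq hω, hset, csSup_Ioc ht]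

lemma lam_singleton_le_one (hω : ∀ j, pair (toR ω) (toR (v j)) = 1) {u : Fin d → ℝ}
    {j : Fin n} (hj : pair u (toR (v j)) ≤ 1) : lam v {ω} u ≤ 1 := by
  rw [lam_singleton_eq hω]
  exact Real.sSup_le (fun l hl => (hl.2 j).trans hj) zero_le_one

lemma sSup_lam_singleton_eq_one (hω : ∀ j, pair (toR ω) (toR (v j)) = 1) [Nonempty (Fin n)]
    {S : Set (Fin d → ℝ)} (hseg : ∀ t : ℝ, 0 < t → t < 1 → t • toR ω ∈ S)
    (hle : ∀ u ∈ S, ∃ j, pair u (toR (v j)) ≤ 1) : sSup (lam v {ω} '' S) = 1 := by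
  refine csSup_eq_of_forall_le_of_forall_lt_exists_gt
    ⟨_, Set.mem_image_of_mem _ (hseg (1 / 2) (by norm_num) (by norm_num))⟩ ?_ fun w hw => ?_
  · rintro _ ⟨u, hu, rfl⟩
    obtain ⟨j, hj⟩ := hle u hu
    exact lam_singleton_le_one hω hj
  · set t := (max w 0 + 1) / 2
    have ht0 : 0 < t := by positivity
    refine ⟨t, ⟨t • toR ω, hseg t ht0 (by grind), lam_singleton_smul hω ht0⟩, by grind⟩

end Gorenstein

theorem gorenstein_fpt_eq_fthreshold_general
    (d n : ℕ) (hd : 1 ≤ d)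
    (v : Fin n → Fin d → ℤ)
    (hdim : FullDim v)
    (ω : Fin d → ℤ) (hωl : toR ω ∈ dualCone v)
    (hω : ∀ j, pair (toR ω) (toR (v j)) = 1) :
    newton v {ω} = toR ω +ᵥ dualCone v ∧
    newton v {ω} ⊆ Qm v ∧
    sSup (lam v {ω} '' (dualCone v \ Qm v)) = 1 ∧
    sSup (lam v {ω} '' (dualCone v \ OSet v)) = 1 := by
  have := nonempty_of_fullDim hd hdim
  obtain ⟨j₀⟩ := ‹Nonempty (Fin n)›
  have hω0 : ω ≠ 0 := by
    rintro rfl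
    simpa [pair_eq_dotProduct] using hω j₀
  have hseg : ∀ t : ℝ, 0 < t → t < 1 → t • toR ω ∈ dualCone v \ OSet v :=
    fun t ht0 ht1 => ⟨smul_mem_dualCone hωl ht0.le, fun ⟨_, j, hj⟩ => by
      rw [pair_smul_of_pair_eq_one hω] at hj; linarith⟩
  refine ⟨newton_singleton v ω,
    newton_singleton v ω ▸ vadd_dualCone_subset_Qm hωl hω0, ?_, ?_⟩
  · refine sSup_lam_singleton_eq_one hω
      (fun t ht0 ht1 => Set.sdiff_subset_sdiff_right (Qm_subset_OSet hdim) (hseg t ht0 ht1)) ?_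
    rintro u ⟨-, huQ⟩
    by_contra! hgt
    exact huQ (mem_Qm_of_one_lt_pair hω hωl hω0 hgt)
  · refine sSup_lam_singleton_eq_one hω hseg fun u ⟨hu, huO⟩ => ⟨j₀, ?_⟩
    by_contra! h
    exact huO ⟨hu, j₀, h.le⟩

/-- in the Gorenstein case (there is a lattice point `ω ∈ σ^∨`
with `⟨ω, v_j⟩ = 1` for all `j`), for `A = {ω}` one has
`P(A) = ω + σ^∨ ⊆ Q(m)` and both `sup_{u ∈ σ^∨ \ Q(m)} λ_A(u)` (the
F-threshold `c^m`) and `sup_{u ∈ σ^∨ \ O} λ_A(u)` (the F-pure threshold)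
equal `1`. -/
theorem gorenstein_fpt_eq_fthreshold
    (d n : ℕ) (hd : 1 ≤ d)
    (v : Fin n → Fin d → ℤ)
    (hsc : StronglyConvex v) (hprim : ∀ j, IsPrimitive (v j))
    (hdim : FullDim v)
    (ω : Fin d → ℤ) (hωl : toR ω ∈ dualCone v)
    (hω : ∀ j, pair (toR ω) (toR (v j)) = 1) :
    newton v {ω} = toR ω +ᵥ dualCone v ∧
    newton v {ω} ⊆ Qm v ∧
    sSup (lam v {ω} '' (dualCone v \ Qm v)) = 1 ∧
    sSup (lam v {ω} '' (dualCone v \ OSet v)) = 1 :=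
  gorenstein_fpt_eq_fthreshold_general d n hd v hdim ω hωl hω

end Paper
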